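/- arXiv:1702.05468 — 6 statements merged into one kernel-verified Lean document; each statement's English description precedes it below -/
import Mathlib

section
/- Let Q be a rate matrix on a countable state space S, let π be a stationary solution of the CME for Q, and let f : S → ℝ be such that ⟨q|f|⟩ := ∑_{x∈S} q(x)|f(x)|π(x) < ∞. Then the double sum ∑_{x∈S} ∑_{y∈S} π(x) q(x,y) f(y) is absolutely summable and ⟨Qf⟩ := ∑_{x∈S} (∑_{y∈S} q(x,y) f(y)) π(x) = 0 (the stationary adjoint equation). -/
open scoped Classical

/-!
Since `q x x ≤ 0` and `q x y ≥ 0` off the diagonal, `|q x y| = q x y - 2 [x = y] q y y`, so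
stationarity turns the column sums of `π x |q x y|` into `-2 π y q y y`. Hence
`∑_{x,y} |π x q x y f y| = 2 ∑_y (-q y y) |f y| π y < ∞`, and for the absolutely summable
double sum we may sum over `x` first, where stationarity gives `0` for every `y`.
-/

section RateMatrix

variable {S : Type*} {q : S → S → ℝ}

lemma diag_nonpos_of_hasSum_offDiag (hq_offdiag : ∀ x y : S, x ≠ y → 0 ≤ q x y) {x : S}
    (hq_row : HasSum (fun y => if y = x then 0 else q x y) (-(q x x))) : q x x ≤ 0 := by
  refine neg_nonneg.mp (hasSum_le (fun y => ?_) hasSum_zero hq_row)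
  split_ifs with h
  · exact le_rfl
  · exact hq_offdiag x y (Ne.symm h)

lemma hasSum_mul_abs_of_stationary {π : S → ℝ}
    (hq_offdiag : ∀ x y : S, x ≠ y → 0 ≤ q x y) {y : S} (hq_diag : q y y ≤ 0)
    (hπ_stat : HasSum (fun x => π x * q x y) 0) :
    HasSum (fun x => π x * |q x y|) (-2 * (π y * q y y)) := by
  have h := hπ_stat.sub ((hasSum_ite_eq y (π y * q y y)).mul_left 2)
  rw [zero_sub, ← neg_mul] at h
  refine h.congr_fun fun x => ?_
  by_cases hxy : x = y
  · subst hxy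
    rw [abs_of_nonpos hq_diag, if_pos rfl]
    ring
  · rw [abs_of_nonneg (hq_offdiag x y hxy), if_neg hxy]
    ring

lemma summable_abs_mul_of_stationary {π f : S → ℝ}
    (hq_offdiag : ∀ x y : S, x ≠ y → 0 ≤ q x y)
    (hq_diag : ∀ x, q x x ≤ 0) (hπ_nonneg : ∀ x, 0 ≤ π x)
    (hπ_stat : ∀ x : S, HasSum (fun y => π y * q y x) 0)
    (hqf : Summable (fun x => -(q x x) * |f x| * π x)) :
    Summable (fun p : S × S => |π p.1 * q p.1 p.2 * f p.2|) := by
  refine Summable.prod_symm (f := fun p : S × S => |π p.2 * q p.2 p.1 * f p.1|) ?_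
  have habs : ∀ y x : S, |π x * q x y * f y| = π x * |q x y| * |f y| := fun y x => by
    rw [abs_mul, abs_mul, abs_of_nonneg (hπ_nonneg x)]
  have hcol : ∀ y : S, HasSum (fun x => |π x * q x y * f y|) (-2 * (π y * q y y) * |f y|) :=
    fun y => by
      simpa only [habs] using
        (hasSum_mul_abs_of_stationary hq_offdiag (hq_diag y) (hπ_stat y)).mul_right |f y|
  rw [summable_prod_of_nonneg (fun _ => abs_nonneg _)]
  refine ⟨fun y => (hcol y).summable, ?_⟩
  simp only [(hcol _).tsum_eq]
  exact (hqf.mul_left 2).congr fun y => by ring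

end RateMatrix

theorem stationary_adjoint_equation_general
    {S : Type*} (q : S → S → ℝ)
    (hq_offdiag : ∀ x y : S, x ≠ y → 0 ≤ q x y)
    (hq_row : ∀ x : S, HasSum (fun y => if y = x then 0 else q x y) (-(q x x)))
    (π : S → ℝ) (hπ_nonneg : ∀ x, 0 ≤ π x)
    (hπ_stat : ∀ x : S, HasSum (fun y => π y * q y x) 0)
    (f : S → ℝ)
    (hqf : Summable (fun x => -(q x x) * |f x| * π x)) :
    Summable (fun p : S × S => π p.1 * q p.1 p.2 * f p.2) ∧
      ∑' x : S, (∑' y : S, q x y * f y) * π x = 0 := by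
  have hsum : Summable (fun p : S × S => π p.1 * q p.1 p.2 * f p.2) :=
    (summable_abs_mul_of_stationary hq_offdiag
      (fun x => diag_nonpos_of_hasSum_offDiag hq_offdiag (hq_row x)) hπ_nonneg hπ_stat hqf).of_abs
  refine ⟨hsum, ?_⟩
  calc ∑' x : S, (∑' y : S, q x y * f y) * π x
      = ∑' x : S, ∑' y : S, π x * q x y * f y := by
        refine tsum_congr fun x => ?_
        rw [← tsum_mul_right]
        exact tsum_congr fun y => by ring
    _ = ∑' y : S, (∑' x : S, π x * q x y) * f y := by
        rw [← hsum.tsum_comm]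
        exact tsum_congr fun y => tsum_mul_right
    _ = 0 := by simp only [(hπ_stat _).tsum_eq, zero_mul, tsum_zero]

/-- stationary adjoint equation.
Let `Q = (q x y)` be a rate matrix on a countable state space `S` (off-diagonal entries
nonnegative, rows summing to zero, with `q x := -(q x x) = ∑_{y ≠ x} q x y < ∞`),
let `π` be a stationary solution of the CME for `Q`, and let `f : S → ℝ` be such that
`⟨q|f|⟩ = ∑ x, q x * |f x| * π x < ∞`.  Then the double sum
`∑_{x ∈ S} ∑_{y ∈ S} π x * q x y * f y` is absolutely summable and
`⟨Qf⟩ = ∑ x, (∑ y, q x y * f y) * π x = 0`. -/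
theorem stationary_adjoint_equation
    {S : Type*} [Countable S] (q : S → S → ℝ)
    (hq_offdiag : ∀ x y : S, x ≠ y → 0 ≤ q x y)
    (hq_row : ∀ x : S, HasSum (fun y => if y = x then 0 else q x y) (-(q x x)))
    (π : S → ℝ) (hπ_nonneg : ∀ x, 0 ≤ π x) (hπ_mass : HasSum π 1)
    (hπ_stat : ∀ x : S, HasSum (fun y => π y * q y x) 0)
    (f : S → ℝ)
    (hqf : Summable (fun x => -(q x x) * |f x| * π x)) :
    Summable (fun p : S × S => π p.1 * q p.1 p.2 * f p.2) ∧
      ∑' x : S, (∑' y : S, q x y * f y) * π x = 0 :=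
  stationary_adjoint_equation_general q hq_offdiag hq_row π hπ_nonneg hπ_stat f hqf
end

section
/- Let π be a stationary solution of the CME for Schlögl's model whose fourth moment ⟨x⁴⟩ is finite. Then its first three moments satisfy the first stationary moment equation b₁ − b₂⟨x⟩ + b₃⟨x²⟩ − b₄⟨x³⟩ = 0, where b₁ := k₃, b₂ := k₁ + 2k₂ + k₄, b₃ := k₁ + 3k₂, and b₄ := k₂. -/
/-!
The rate matrix of Schlögl's model is the generator of a birth–death chain with birth rate
`λ = a₁ + a₃` and death rate `μ = a₂ + a₄`, where `μ(0) = 0`. Stationarity then forces detailed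
balance `π(x) λ(x) = π(x+1) μ(x+1)`, and summing it over `x` gives
`⟨λ⟩ = ⟨μ⟩`. A finite fourth moment makes the moments of order `≤ 3` finite, so both sides can be
expanded into moments, `λ` and `μ` being polynomials of degree `2` and `3`; their difference is the
moment equation.
-/

/-- Propensity `a₁(x) = k₁ x (x-1)` of Schlögl's model. -/
noncomputable def schloglA1 (k₁ : ℝ) (x : ℕ) : ℝ := k₁ * x * ((x : ℝ) - 1)

/-- Propensity `a₂(x) = k₂ x (x-1) (x-2)` of Schlögl's model. -/
noncomputable def schloglA2 (k₂ : ℝ) (x : ℕ) : ℝ := k₂ * x * ((x : ℝ) - 1) * ((x : ℝ) - 2)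

/-- Propensity `a₃(x) = k₃` of Schlögl's model. -/
noncomputable def schloglA3 (k₃ : ℝ) (_x : ℕ) : ℝ := k₃

/-- Propensity `a₄(x) = k₄ x` of Schlögl's model. -/
noncomputable def schloglA4 (k₄ : ℝ) (x : ℕ) : ℝ := k₄ * x

/-- The rate matrix of Schlögl's model: `q(x, x+1) = a₁(x) + a₃(x)`,
`q(x, x-1) = a₂(x) + a₄(x)` for `x ≥ 1`, `q(x,x) = -∑ⱼ aⱼ(x)`, all other entries `0`. -/
noncomputable def schloglQ (k₁ k₂ k₃ k₄ : ℝ) (x y : ℕ) : ℝ :=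
  if y = x + 1 then schloglA1 k₁ x + schloglA3 k₃ x
  else if y + 1 = x then schloglA2 k₂ x + schloglA4 k₄ x
  else if y = x then
    -(schloglA1 k₁ x + schloglA2 k₂ x + schloglA3 k₃ x + schloglA4 k₄ x)
  else 0

noncomputable def birthDeathQ (birth death : ℕ → ℝ) (x y : ℕ) : ℝ :=
  if y = x + 1 then birth x
  else if y + 1 = x then death x
  else if y = x then -(birth x + death x)
  else 0

section BirthDeath

variable (birth death π : ℕ → ℝ)

theorem tsum_mul_birthDeathQ_zero :
    ∑' y, π y * birthDeathQ birth death y 0 = -(π 0 * (birth 0 + death 0)) + π 1 * death 1 := by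
  rw [tsum_eq_sum (s := {0, 1}) fun y hy => by
    simp only [Finset.mem_insert, Finset.mem_singleton, not_or] at hy
    simp only [birthDeathQ]
    rw [if_neg (by omega), if_neg (by omega), if_neg (by omega), mul_zero]]
  simp [birthDeathQ]
  ring

theorem tsum_mul_birthDeathQ_succ (x : ℕ) :
    ∑' y, π y * birthDeathQ birth death y (x + 1) =
      π x * birth x - π (x + 1) * (birth (x + 1) + death (x + 1)) + π (x + 2) * death (x + 2) := by
  rw [tsum_eq_sum (s := {x, x + 1, x + 2}) fun y hy => by
    simp only [Finset.mem_insert, Finset.mem_singleton, not_or] at hy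
    simp only [birthDeathQ]
    rw [if_neg (by omega), if_neg (by omega), if_neg (by omega), mul_zero]]
  simp [birthDeathQ, Finset.sum_insert]
  ring

variable {birth death π}

theorem birthDeath_detailed_balance (hdeath : death 0 = 0)
    (hstat : ∀ x, ∑' y, π y * birthDeathQ birth death y x = 0) (x : ℕ) :
    π x * birth x = π (x + 1) * death (x + 1) := by
  induction x with
  | zero =>
    have h := hstat 0
    rw [tsum_mul_birthDeathQ_zero, hdeath] at h
    linarith
  | succ n ih =>
    have h := hstat (n + 1)
    rw [tsum_mul_birthDeathQ_succ] at h
    linarith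

theorem tsum_mul_birth_eq_tsum_mul_death (hdeath : death 0 = 0)
    (hbal : ∀ x, π x * birth x = π (x + 1) * death (x + 1))
    (hsum : Summable fun x => π x * death x) :
    ∑' x, π x * birth x = ∑' x, π x * death x := by
  rw [tsum_congr hbal, hsum.tsum_eq_zero_add, hdeath, mul_zero, zero_add]

end BirthDeath

theorem summable_pow_mul_of_le {π : ℕ → ℝ} (hπ_nonneg : ∀ x, 0 ≤ π x) (hπ : Summable π)
    {m n : ℕ} (hmn : m ≤ n) (hn : Summable fun x : ℕ => (x : ℝ) ^ n * π x) :
    Summable fun x : ℕ => (x : ℝ) ^ m * π x := by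
  refine (hπ.add hn).of_nonneg_of_le (fun x => mul_nonneg (by positivity) (hπ_nonneg x)) fun x => ?_
  have hpow : (x : ℝ) ^ m ≤ 1 + (x : ℝ) ^ n := by
    rcases Nat.eq_zero_or_pos x with rfl | hx
    · rcases Nat.eq_zero_or_pos m with rfl | hm
      · simp
      · simp [zero_pow hm.ne', zero_pow (hm.trans_le hmn).ne']
    · have := pow_le_pow_right₀ (by exact_mod_cast hx : (1 : ℝ) ≤ x) hmn
      linarith
  nlinarith [hπ_nonneg x]

noncomputable def schloglBirth (k₁ k₃ : ℝ) (x : ℕ) : ℝ := schloglA1 k₁ x + schloglA3 k₃ x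

noncomputable def schloglDeath (k₂ k₄ : ℝ) (x : ℕ) : ℝ := schloglA2 k₂ x + schloglA4 k₄ x

theorem schloglDeath_zero (k₂ k₄ : ℝ) : schloglDeath k₂ k₄ 0 = 0 := by
  simp [schloglDeath, schloglA2, schloglA4]

theorem schloglQ_eq_birthDeathQ (k₁ k₂ k₃ k₄ : ℝ) :
    schloglQ k₁ k₂ k₃ k₄ = birthDeathQ (schloglBirth k₁ k₃) (schloglDeath k₂ k₄) := by
  ext x y
  simp only [schloglQ, birthDeathQ, schloglBirth, schloglDeath]
  split_ifs <;> ring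

section Moments

variable {π : ℕ → ℝ} {m₀ m₁ m₂ m₃ : ℝ}

theorem hasSum_mul_schloglBirth (k₁ k₃ : ℝ) (hm₀ : HasSum π m₀)
    (hm₁ : HasSum (fun x : ℕ => (x : ℝ) * π x) m₁)
    (hm₂ : HasSum (fun x : ℕ => (x : ℝ) ^ 2 * π x) m₂) :
    HasSum (fun x => π x * schloglBirth k₁ k₃ x) (k₃ * m₀ - k₁ * m₁ + k₁ * m₂) := by
  refine (((hm₀.mul_left k₃).sub (hm₁.mul_left k₁)).add (hm₂.mul_left k₁)).congr_fun fun x => ?_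
  simp only [schloglBirth, schloglA1, schloglA3]
  ring

theorem hasSum_mul_schloglDeath (k₂ k₄ : ℝ) (hm₁ : HasSum (fun x : ℕ => (x : ℝ) * π x) m₁)
    (hm₂ : HasSum (fun x : ℕ => (x : ℝ) ^ 2 * π x) m₂)
    (hm₃ : HasSum (fun x : ℕ => (x : ℝ) ^ 3 * π x) m₃) :
    HasSum (fun x => π x * schloglDeath k₂ k₄ x)
      ((2 * k₂ + k₄) * m₁ - 3 * k₂ * m₂ + k₂ * m₃) := by
  refine (((hm₁.mul_left (2 * k₂ + k₄)).sub (hm₂.mul_left (3 * k₂))).add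
    (hm₃.mul_left k₂)).congr_fun fun x => ?_
  simp only [schloglDeath, schloglA2, schloglA4]
  ring

end Moments

theorem schlogl_first_moment_equation_general
    (k₁ k₂ k₃ k₄ : ℝ)
    (π : ℕ → ℝ) (hπ_nonneg : ∀ x, 0 ≤ π x) (hπ_mass : HasSum π 1)
    (hπ_stat : ∀ x : ℕ, ∑' y : ℕ, π y * schloglQ k₁ k₂ k₃ k₄ y x = 0)
    (hmom4 : Summable (fun x : ℕ => (x : ℝ) ^ 4 * π x)) :
    k₃ - (k₁ + 2 * k₂ + k₄) * (∑' x : ℕ, (x : ℝ) * π x)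
        + (k₁ + 3 * k₂) * (∑' x : ℕ, (x : ℝ) ^ 2 * π x)
        - k₂ * (∑' x : ℕ, (x : ℝ) ^ 3 * π x) = 0 := by
  have hmom {m : ℕ} (hm : m ≤ 4) : Summable fun x : ℕ => (x : ℝ) ^ m * π x :=
    summable_pow_mul_of_le hπ_nonneg hπ_mass.summable hm hmom4
  have hm₁ := (hmom (m := 1) (by norm_num)).hasSum
  simp only [pow_one] at hm₁
  have hm₂ := (hmom (m := 2) (by norm_num)).hasSum
  have hm₃ := (hmom (m := 3) (by norm_num)).hasSum
  have hbirth := hasSum_mul_schloglBirth k₁ k₃ hπ_mass hm₁ hm₂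
  have hdeath := hasSum_mul_schloglDeath k₂ k₄ hm₁ hm₂ hm₃
  have hbal := birthDeath_detailed_balance (schloglDeath_zero k₂ k₄)
    (by simpa only [schloglQ_eq_birthDeathQ] using hπ_stat)
  have hflux := tsum_mul_birth_eq_tsum_mul_death (schloglDeath_zero k₂ k₄) hbal hdeath.summable
  rw [hbirth.tsum_eq, hdeath.tsum_eq] at hflux
  linarith

/-- first stationary moment equation of Schlögl's model.
If `π` is a stationary solution of the CME for Schlögl's model whose fourth moment
`⟨x⁴⟩` is finite, then `b₁ - b₂⟨x⟩ + b₃⟨x²⟩ - b₄⟨x³⟩ = 0` with `b₁ = k₃`,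
`b₂ = k₁ + 2k₂ + k₄`, `b₃ = k₁ + 3k₂` and `b₄ = k₂`. -/
theorem schlogl_first_moment_equation
    (k₁ k₂ k₃ k₄ : ℝ) (hk₁ : 0 < k₁) (hk₂ : 0 < k₂) (hk₃ : 0 < k₃) (hk₄ : 0 < k₄)
    (π : ℕ → ℝ) (hπ_nonneg : ∀ x, 0 ≤ π x) (hπ_mass : HasSum π 1)
    (hπ_stat : ∀ x : ℕ, ∑' y : ℕ, π y * schloglQ k₁ k₂ k₃ k₄ y x = 0)
    (hmom4 : Summable (fun x : ℕ => (x : ℝ) ^ 4 * π x)) :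
    k₃ - (k₁ + 2 * k₂ + k₄) * (∑' x : ℕ, (x : ℝ) * π x)
        + (k₁ + 3 * k₂) * (∑' x : ℕ, (x : ℝ) ^ 2 * π x)
        - k₂ * (∑' x : ℕ, (x : ℝ) ^ 3 * π x) = 0 :=
  schlogl_first_moment_equation_general k₁ k₂ k₃ k₄ π hπ_nonneg hπ_mass hπ_stat hmom4
end

section
/- (Theorem 1 of the paper.) Consider a reaction network on S ⊆ ℕⁿ with rational propensities a_j = s_j/o, and let d ≥ d_o. Let π be a stationary solution of the CME whose rational moments z_β := ⟨x^β/o⟩ are finite for all |β| ≤ d+1. Then the vector z = (z_β)_{|β|≤d} belongs to the spectrahedron 𝓔^d, i.e.: (1) zᵀ𝐨 = 1, where 𝐨 is the coefficient vector of o; (2) for every multi-index α with |α| ≤ d − d_a + 1, zᵀ𝐠_α = 0, where 𝐠_α is the coefficient vector of the polynomial x ↦ ∑_{j=1}^m s_j(x)((x+v_j)^α − x^α); and (3) the localising matrices M_d⁰(z), M_d¹(z), …, M_dⁿ(z) are positive semidefinite. -/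
open MvPolynomial

/-- The rational moment `z_β = ⟨x^β / o⟩` of `π` w.r.t. the denominator polynomial `o`. -/
noncomputable def ratMoment {n : ℕ} (o : MvPolynomial (Fin n) ℝ)
    (π : (Fin n → ℕ) → ℝ) (β : Fin n →₀ ℕ) : ℝ :=
  ∑' x : Fin n → ℕ, (∏ i, (x i : ℝ) ^ β i) / eval (fun i => (x i : ℝ)) o * π x

/-- `π` has finite rational moments `⟨x^β / o⟩` for all multi-indices `β` with `|β| ≤ d`. -/
def HasRatMoments {n : ℕ} (o : MvPolynomial (Fin n) ℝ)
    (π : (Fin n → ℕ) → ℝ) (d : ℕ) : Prop :=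
  ∀ β : Fin n →₀ ℕ, (∑ i, β i) ≤ d →
    Summable (fun x : Fin n → ℕ =>
      (∏ i, (x i : ℝ) ^ β i) / eval (fun i => (x i : ℝ)) o * π x)

/-- The polynomial `x ↦ ∑ⱼ sⱼ(x) ((x + vⱼ)^α - x^α)` appearing in the `α`-moment
equation. -/
noncomputable def momentPoly {n m : ℕ} (v : Fin m → Fin n → ℤ)
    (s : Fin m → MvPolynomial (Fin n) ℝ) (α : Fin n →₀ ℕ) : MvPolynomial (Fin n) ℝ :=
  ∑ j, s j * ((∏ i, (X i + C ((v j i : ℝ))) ^ α i) -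
    ∏ i, (X i : MvPolynomial (Fin n) ℝ) ^ α i)

/-- The spectrahedron `𝓔^d`: vectors `y = (y_β)` satisfying the normalisation
`yᵀ𝐨 = 1`, the moment equations `yᵀ𝐠_α = 0` for `|α| ≤ d - d_a + 1`, and positive
semidefiniteness of the localising matrices `M_d⁰(y), …, M_dⁿ(y)` (expressed via their
quadratic forms on coefficient vectors of polynomials of the appropriate degrees). -/
def spectrahedron {n m : ℕ} (v : Fin m → Fin n → ℤ) (s : Fin m → MvPolynomial (Fin n) ℝ)
    (o : MvPolynomial (Fin n) ℝ) (da d : ℕ) : Set ((Fin n →₀ ℕ) → ℝ) :=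
  {y | (∑ β ∈ o.support, coeff β o * y β = 1) ∧
    (∀ α : Fin n →₀ ℕ, ((∑ i, (α i : ℤ)) ≤ (d : ℤ) - (da : ℤ) + 1) →
      ∑ β ∈ (momentPoly v s α).support, coeff β (momentPoly v s α) * y β = 0) ∧
    (∀ g : MvPolynomial (Fin n) ℝ, g.totalDegree ≤ d / 2 →
      0 ≤ ∑ α ∈ g.support, ∑ β ∈ g.support, coeff α g * coeff β g * y (α + β)) ∧
    (∀ i₀ : Fin n, ∀ g : MvPolynomial (Fin n) ℝ, g.totalDegree ≤ (d - 1) / 2 →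
      0 ≤ ∑ α ∈ g.support, ∑ β ∈ g.support,
        coeff α g * coeff β g * y (α + β + Finsupp.single i₀ 1))}

/-!
The vector `z` is the coefficient form of the functional `p ↦ ⟨p/o⟩` on polynomials of degree
`≤ d + 1`, so the normalisation is `⟨o/o⟩ = 1` and the localising conditions are `⟨g²/o⟩ ≥ 0`
and `⟨xᵢ g²/o⟩ ≥ 0`.

The moment equations come from testing `πQ = 0` against `y ↦ yᵅ`: the double series
`∑ₓ ∑_y π(x) q(x,y) yᵅ` may be summed in either order, because its off-diagonal terms are
nonnegative and its diagonal and row sums are controlled by rational moments of degree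
`≤ d_a + |α|`. Summing columns first gives `0`; summing rows first gives
`⟨∑ⱼ sⱼ ((x + vⱼ)ᵅ - xᵅ) / o⟩` minus the contribution of reactions with `vⱼ = 0`, and the
case `α = 0` shows that this contribution vanishes identically.
-/

theorem MvPolynomial.sum_le_totalDegree {σ R : Type*} [CommSemiring R] [Fintype σ]
    {p : MvPolynomial σ R} {β : σ →₀ ℕ} (hβ : β ∈ p.support) : ∑ k, β k ≤ p.totalDegree := by
  simpa [Finsupp.sum_fintype] using le_totalDegree hβ

theorem MvPolynomial.totalDegree_prod_pow_le {σ R ι : Type*} [CommSemiring R] [Fintype ι]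
    {f : ι → MvPolynomial σ R} (hf : ∀ i, (f i).totalDegree ≤ 1) (e : ι → ℕ) :
    (∏ i, f i ^ e i).totalDegree ≤ ∑ i, e i :=
  (totalDegree_finsetProd _ _).trans <| Finset.sum_le_sum fun i _ =>
    (totalDegree_pow _ _).trans <| by simpa using Nat.mul_le_mul_left (e i) (hf i)

section OffDiagonalFubini

variable {X : Type*} {F : X → X → ℝ} {r : X → ℝ}

theorem summable_uncurry_of_offDiag_nonneg (hoff : ∀ x y, x ≠ y → 0 ≤ F x y)
    (hdiag : Summable fun x => F x x) (hrow : ∀ x, HasSum (F x) (r x)) (hr : Summable r) :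
    Summable (Function.uncurry F) := by
  classical
  have hdiag' : Summable fun p : X × X => if p.1 = p.2 then F p.1 p.2 else 0 := by
    refine (Function.Injective.summable_iff (g := fun x => (x, x))
      (fun x y h => congrArg Prod.fst h) fun p hp => if_neg fun h => hp ⟨p.1, ?_⟩).mp ?_
    · exact Prod.ext rfl h
    · exact hdiag.congr fun x => by simp
  have hrow' : ∀ x, HasSum (fun y => if x = y then 0 else F x y) (r x - F x x) := fun x => by
    have h := (hrow x).update x 0
    rw [zero_sub, neg_add_eq_sub] at h
    refine h.congr_fun fun y => ?_
    rw [Function.update_apply]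
    by_cases hxy : x = y
    · rw [if_pos hxy, if_pos hxy.symm]
    · rw [if_neg hxy, if_neg (Ne.symm hxy)]
  have hoff' : Summable fun p : X × X => if p.1 = p.2 then 0 else F p.1 p.2 := by
    refine (summable_prod_of_nonneg fun p => ?_).mpr
      ⟨fun x => (hrow' x).summable, (hr.sub hdiag).congr fun x => (hrow' x).tsum_eq.symm⟩
    dsimp only
    split_ifs with h
    exacts [le_rfl, hoff _ _ h]
  exact (hdiag'.add hoff').congr fun p => by split_ifs <;> simp [Function.uncurry]

theorem hasSum_zero_of_offDiag_nonneg_of_hasSum_col (hoff : ∀ x y, x ≠ y → 0 ≤ F x y)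
    (hdiag : Summable fun x => F x x) (hrow : ∀ x, HasSum (F x) (r x)) (hr : Summable r)
    (hcol : ∀ y, HasSum (fun x => F x y) 0) : HasSum r 0 := by
  have hcomm := (summable_uncurry_of_offDiag_nonneg hoff hdiag hrow hr).tsum_comm'
    (fun x => (hrow x).summable) fun y => (hcol y).summable
  simp only [(hrow _).tsum_eq, (hcol _).tsum_eq, tsum_zero] at hcomm
  exact hcomm ▸ hr.hasSum

end OffDiagonalFubini

section RationalMoments

variable {n : ℕ} {o : MvPolynomial (Fin n) ℝ} {π : (Fin n → ℕ) → ℝ} {D : ℕ}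

theorem HasRatMoments.hasSum_sum_mul_monomial (hmom : HasRatMoments o π D) {ι : Type*}
    (t : Finset ι) (c : ι → ℝ) (e : ι → Fin n →₀ ℕ) (he : ∀ i ∈ t, ∑ k, e i k ≤ D) :
    HasSum (fun x => (∑ i ∈ t, c i * ∏ k, (x k : ℝ) ^ e i k) / eval (fun k => (x k : ℝ)) o * π x)
      (∑ i ∈ t, c i * ratMoment o π (e i)) := by
  refine (hasSum_sum fun (i : ι) hi => (hmom (e i) (he i hi)).hasSum.mul_left (c i)).congr_fun
    fun x => ?_
  rw [Finset.sum_div, Finset.sum_mul]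
  exact Finset.sum_congr rfl fun i _ => by ring

theorem HasRatMoments.hasSum_eval (hmom : HasRatMoments o π D) (p : MvPolynomial (Fin n) ℝ)
    (hp : p.totalDegree ≤ D) :
    HasSum (fun x => eval (fun k => (x k : ℝ)) p / eval (fun k => (x k : ℝ)) o * π x)
      (∑ β ∈ p.support, coeff β p * ratMoment o π β) :=
  (hmom.hasSum_sum_mul_monomial p.support (coeff · p) id
    fun _ hβ => (sum_le_totalDegree hβ).trans hp).congr_fun fun x => by rw [eval_eq']; rfl

theorem HasRatMoments.hasSum_sq_mul_monomial (hmom : HasRatMoments o π D)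
    (g : MvPolynomial (Fin n) ℝ) (γ : Fin n →₀ ℕ) (hdeg : 2 * g.totalDegree + ∑ k, γ k ≤ D) :
    HasSum (fun x => eval (fun k => (x k : ℝ)) g ^ 2 * (∏ k, (x k : ℝ) ^ γ k) /
        eval (fun k => (x k : ℝ)) o * π x)
      (∑ α ∈ g.support, ∑ β ∈ g.support, coeff α g * coeff β g * ratMoment o π (α + β + γ)) := by
  rw [← Finset.sum_product']
  refine (hmom.hasSum_sum_mul_monomial _
    (fun p : (Fin n →₀ ℕ) × (Fin n →₀ ℕ) => coeff p.1 g * coeff p.2 g) (fun p => p.1 + p.2 + γ)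
    fun p hp => ?_).congr_fun fun x => ?_
  · obtain ⟨h₁, h₂⟩ := Finset.mem_product.mp hp
    have := sum_le_totalDegree h₁
    have := sum_le_totalDegree h₂
    simp only [Finsupp.add_apply, Finset.sum_add_distrib]
    omega
  · rw [Finset.sum_product, sq, eval_eq', Finset.sum_mul_sum, Finset.sum_mul]
    congr 2
    refine Finset.sum_congr rfl fun α _ => ?_
    rw [Finset.sum_mul]
    refine Finset.sum_congr rfl fun β _ => ?_
    simp only [Finsupp.add_apply, pow_add, Finset.prod_mul_distrib]
    ring

theorem localisingForm_ratMoment_nonneg {S : Set (Fin n → ℕ)}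
    (ho_pos : ∀ x ∈ S, 0 < eval (fun i => (x i : ℝ)) o) (hπ_nonneg : ∀ x, 0 ≤ π x)
    (hπ_supp : ∀ x ∉ S, π x = 0) (hmom : HasRatMoments o π D) (g : MvPolynomial (Fin n) ℝ)
    (γ : Fin n →₀ ℕ) (hdeg : 2 * g.totalDegree + ∑ k, γ k ≤ D) :
    0 ≤ ∑ α ∈ g.support, ∑ β ∈ g.support, coeff α g * coeff β g * ratMoment o π (α + β + γ) := by
  refine (hmom.hasSum_sq_mul_monomial g γ hdeg).nonneg fun x => ?_
  by_cases hx : x ∈ S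
  · exact mul_nonneg (div_nonneg (by positivity) (ho_pos x hx).le) (hπ_nonneg x)
  · rw [hπ_supp x hx, mul_zero]

end RationalMoments

section ReactionNetwork

variable {n m : ℕ} {S : Set (Fin n → ℕ)} {v : Fin m → Fin n → ℤ}
  {a : Fin m → (Fin n → ℕ) → ℝ} {q : (Fin n → ℕ) → (Fin n → ℕ) → ℝ} {π : (Fin n → ℕ) → ℝ}

noncomputable def generator (a : Fin m → (Fin n → ℕ) → ℝ) (v : Fin m → Fin n → ℤ)
    (g : (Fin n → ℝ) → ℝ) (x : Fin n → ℕ) : ℝ :=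
  ∑ j, a j x * (g (fun i => x i + v j i) - g (fun i => x i))

/-- Reactions with `vⱼ = 0` enter the diagonal of `Q` but no off-diagonal entry, so the rows of
`Q` sum to minus this rate. -/
noncomputable def selfLoopRate (a : Fin m → (Fin n → ℕ) → ℝ) (v : Fin m → Fin n → ℤ)
    (x : Fin n → ℕ) : ℝ :=
  ∑ j ∈ Finset.univ.filter (fun j => v j = 0), a j x

theorem rate_nonneg
    (hq_offdiag : ∀ x y, y ≠ x →
      q x y = ∑ j ∈ Finset.univ.filter (fun j => ∀ i, (y i : ℤ) = (x i : ℤ) + v j i), a j x)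
    (ha_nonneg : ∀ j, ∀ x ∈ S, 0 ≤ a j x) {x y : Fin n → ℕ} (hx : x ∈ S) (hyx : y ≠ x) :
    0 ≤ q x y := by
  rw [hq_offdiag x y hyx]
  exact Finset.sum_nonneg fun j _ => ha_nonneg j x hx

theorem rate_eq_zero_of_notMem
    (hq_offdiag : ∀ x y, y ≠ x →
      q x y = ∑ j ∈ Finset.univ.filter (fun j => ∀ i, (y i : ℤ) = (x i : ℤ) + v j i), a j x)
    (hclosed : ∀ x ∈ S, ∀ j, a j x ≠ 0 → ∃ y ∈ S, ∀ i, (y i : ℤ) = (x i : ℤ) + v j i)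
    {x y : Fin n → ℕ} (hx : x ∈ S) (hy : y ∉ S) : q x y = 0 := by
  rw [hq_offdiag x y fun h => hy (h ▸ hx)]
  refine Finset.sum_eq_zero fun j hj => by_contra fun haj => ?_
  obtain ⟨y', hy'S, hy'⟩ := hclosed x hx j haj
  have hjy := (Finset.mem_filter.mp hj).2
  have hyy' : y' = y := funext fun i => by have := hjy i; have := hy' i; omega
  exact hy (hyy' ▸ hy'S)

theorem hasSum_rate_mul
    (hq_offdiag : ∀ x y, y ≠ x →
      q x y = ∑ j ∈ Finset.univ.filter (fun j => ∀ i, (y i : ℤ) = (x i : ℤ) + v j i), a j x)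
    (hq_diag : ∀ x, q x x = -∑ j, a j x) {x : Fin n → ℕ}
    (hreach : ∀ j, a j x ≠ 0 → ∃ y : Fin n → ℕ, ∀ i, (y i : ℤ) = (x i : ℤ) + v j i)
    (g : (Fin n → ℝ) → ℝ) :
    HasSum (fun y => q x y * g (fun i => y i))
      (generator a v g x - selfLoopRate a v x * g (fun i => x i)) := by
  classical
  set T : Fin m → (Fin n → ℕ) → ℝ := fun j y =>
    if ∀ i, (y i : ℤ) = (x i : ℤ) + v j i then a j x * g (fun i => y i) else 0
  have hT : ∀ j, HasSum (T j) (a j x * g (fun i => x i + v j i)) := fun j => by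
    by_cases haj : a j x = 0
    · simp only [T, haj, zero_mul, ite_self]
      exact hasSum_zero
    obtain ⟨y₀, hy₀⟩ := hreach j haj
    have hcast : (fun i => (y₀ i : ℝ)) = fun i => (x i : ℝ) + (v j i : ℝ) :=
      funext fun i => by exact_mod_cast hy₀ i
    have h := hasSum_single (f := T j) y₀ fun y hy => if_neg fun h =>
      hy (funext fun i => by have := h i; have := hy₀ i; omega)
    simpa only [T, if_pos hy₀, hcast] using h
  have hloop : ∀ j, (∀ i, (x i : ℤ) = (x i : ℤ) + v j i) ↔ v j = 0 := fun j =>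
    ⟨fun h => funext fun i => by have := h i; simp only [Pi.zero_apply]; omega,
      fun h i => by simp [h]⟩
  have hT_self : ∑ j, T j x = selfLoopRate a v x * g (fun i => x i) := by
    simp only [T, selfLoopRate, Finset.sum_filter, Finset.sum_mul, hloop]
    exact Finset.sum_congr rfl fun j _ => by split_ifs <;> simp
  have hpoint : ∀ y, q x y * g (fun i => y i) =
      (if y = x then (q x x - selfLoopRate a v x) * g (fun i => x i) else 0) + ∑ j, T j y := by
    intro y
    by_cases hyx : y = x
    · subst hyx
      rw [if_pos rfl, hT_self]
      ring
    · rw [if_neg hyx, zero_add, hq_offdiag x y hyx, Finset.sum_filter, Finset.sum_mul]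
      exact Finset.sum_congr rfl fun j _ => by simp only [T]; split_ifs <;> simp
  have hsum := (hasSum_ite_eq x ((q x x - selfLoopRate a v x) * g (fun i => x i))).add
    (hasSum_sum (s := Finset.univ) fun j _ => hT j)
  convert hsum.congr_fun hpoint using 1
  simp only [generator, hq_diag, mul_sub, Finset.sum_sub_distrib, ← Finset.sum_mul]
  ring

theorem hasSum_mul_rate_eq_zero
    (hq_offdiag : ∀ x y, y ≠ x →
      q x y = ∑ j ∈ Finset.univ.filter (fun j => ∀ i, (y i : ℤ) = (x i : ℤ) + v j i), a j x)
    (hclosed : ∀ x ∈ S, ∀ j, a j x ≠ 0 → ∃ y ∈ S, ∀ i, (y i : ℤ) = (x i : ℤ) + v j i)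
    (hπ_supp : ∀ x ∉ S, π x = 0) (hπ_stat : ∀ x ∈ S, HasSum (fun y => π y * q y x) 0)
    (y : Fin n → ℕ) : HasSum (fun x => π x * q x y) 0 := by
  by_cases hy : y ∈ S
  · exact hπ_stat y hy
  refine hasSum_zero.congr_fun fun x => ?_
  by_cases hx : x ∈ S
  · rw [rate_eq_zero_of_notMem hq_offdiag hclosed hx hy, mul_zero]
  · rw [hπ_supp x hx, zero_mul]

theorem hasSum_mul_generator_sub_selfLoopRate
    (hq_offdiag : ∀ x y, y ≠ x →
      q x y = ∑ j ∈ Finset.univ.filter (fun j => ∀ i, (y i : ℤ) = (x i : ℤ) + v j i), a j x)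
    (hq_diag : ∀ x, q x x = -∑ j, a j x) (ha_nonneg : ∀ j, ∀ x ∈ S, 0 ≤ a j x)
    (hclosed : ∀ x ∈ S, ∀ j, a j x ≠ 0 → ∃ y ∈ S, ∀ i, (y i : ℤ) = (x i : ℤ) + v j i)
    (hπ_nonneg : ∀ x, 0 ≤ π x) (hπ_supp : ∀ x ∉ S, π x = 0)
    (hπ_stat : ∀ x ∈ S, HasSum (fun y => π y * q y x) 0)
    {g : (Fin n → ℝ) → ℝ} (hg : ∀ x : Fin n → ℕ, 0 ≤ g (fun i => x i))
    (hrate : ∀ j, Summable fun x => π x * a j x * g (fun i => x i))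
    (hgen : Summable fun x => π x * generator a v g x) :
    HasSum (fun x => π x * (generator a v g x - selfLoopRate a v x * g (fun i => x i))) 0 := by
  refine hasSum_zero_of_offDiag_nonneg_of_hasSum_col
    (F := fun x y => π x * q x y * g (fun i => y i)) (fun x y hxy => ?_) ?_ (fun x => ?_) ?_
    fun y => by
      simpa using (hasSum_mul_rate_eq_zero hq_offdiag hclosed hπ_supp hπ_stat y).mul_right _
  · by_cases hx : x ∈ S
    · exact mul_nonneg (mul_nonneg (hπ_nonneg x)
        (rate_nonneg hq_offdiag ha_nonneg hx (Ne.symm hxy))) (hg y)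
    · simp [hπ_supp x hx]
  · refine (summable_sum (s := Finset.univ) fun j _ => hrate j).neg.congr fun x => ?_
    simp only [hq_diag, mul_neg, neg_mul, Finset.mul_sum, Finset.sum_mul]
  · by_cases hx : x ∈ S
    · have hreach j (haj : a j x ≠ 0) := (hclosed x hx j haj).imp fun _ h => h.2
      simpa only [mul_assoc] using
        (hasSum_rate_mul hq_offdiag hq_diag hreach g).mul_left (π x)
    · simp [hπ_supp x hx]
  · refine (hgen.sub (summable_sum (s := Finset.univ.filter (fun j => v j = 0))
      fun j _ => hrate j)).congr fun x => ?_
    simp only [selfLoopRate, mul_sub, Finset.sum_mul, Finset.mul_sum, mul_assoc]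

theorem mul_selfLoopRate_eq_zero
    (hq_offdiag : ∀ x y, y ≠ x →
      q x y = ∑ j ∈ Finset.univ.filter (fun j => ∀ i, (y i : ℤ) = (x i : ℤ) + v j i), a j x)
    (hq_diag : ∀ x, q x x = -∑ j, a j x) (ha_nonneg : ∀ j, ∀ x ∈ S, 0 ≤ a j x)
    (hclosed : ∀ x ∈ S, ∀ j, a j x ≠ 0 → ∃ y ∈ S, ∀ i, (y i : ℤ) = (x i : ℤ) + v j i)
    (hπ_nonneg : ∀ x, 0 ≤ π x) (hπ_supp : ∀ x ∉ S, π x = 0)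
    (hπ_stat : ∀ x ∈ S, HasSum (fun y => π y * q y x) 0)
    (hrate : ∀ j, Summable fun x => π x * a j x) (x : Fin n → ℕ) :
    π x * selfLoopRate a v x = 0 := by
  have h : HasSum (fun x => π x * selfLoopRate a v x) 0 := by
    simpa [generator] using (hasSum_mul_generator_sub_selfLoopRate hq_offdiag hq_diag ha_nonneg
      hclosed hπ_nonneg hπ_supp hπ_stat (g := fun _ => 1) (fun _ => zero_le_one)
      (by simpa using hrate) (by simp [generator])).neg
  have hnonneg : ∀ x, 0 ≤ π x * selfLoopRate a v x := fun x => by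
    by_cases hx : x ∈ S
    · exact mul_nonneg (hπ_nonneg x) (Finset.sum_nonneg fun j _ => ha_nonneg j x hx)
    · rw [hπ_supp x hx, zero_mul]
  exact congrFun ((hasSum_zero_iff_of_nonneg hnonneg).mp h) x

end ReactionNetwork

section MomentEquations

variable {n m : ℕ} {S : Set (Fin n → ℕ)} {v : Fin m → Fin n → ℤ}
  {s : Fin m → MvPolynomial (Fin n) ℝ} {o : MvPolynomial (Fin n) ℝ}
  {a : Fin m → (Fin n → ℕ) → ℝ} {q : (Fin n → ℕ) → (Fin n → ℕ) → ℝ} {π : (Fin n → ℕ) → ℝ}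
  {D da : ℕ}

theorem totalDegree_momentPoly_le (hda : ∀ j, (s j).totalDegree ≤ da) (α : Fin n →₀ ℕ) :
    (momentPoly v s α).totalDegree ≤ da + ∑ i, α i := by
  have hshift : ∀ j i, (X i + C (v j i : ℝ) : MvPolynomial (Fin n) ℝ).totalDegree ≤ 1 :=
    fun j i => (totalDegree_add _ _).trans
      (max_le (totalDegree_X i).le ((totalDegree_C _).trans_le zero_le_one))
  refine (totalDegree_finsetSum _ _).trans <| Finset.sup_le fun j _ =>
    (totalDegree_mul _ _).trans <| add_le_add (hda j) <| (totalDegree_sub _ _).trans <|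
      max_le (totalDegree_prod_pow_le (hshift j) _) (totalDegree_prod_pow_le (fun i => ?_) _)
  exact (totalDegree_X i).le

theorem eval_momentPoly_div_mul
    (ha : ∀ j x, a j x = eval (fun i => (x i : ℝ)) (s j) / eval (fun i => (x i : ℝ)) o)
    (α : Fin n →₀ ℕ) (x : Fin n → ℕ) :
    eval (fun i => (x i : ℝ)) (momentPoly v s α) / eval (fun i => (x i : ℝ)) o * π x =
      π x * generator a v (fun ξ => ∏ i, ξ i ^ α i) x := by
  simp only [momentPoly, generator, ha, map_sum, map_mul, map_sub, map_prod, map_pow, map_add,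
    eval_X, eval_C, Finset.sum_div, Finset.sum_mul, Finset.mul_sum]
  exact Finset.sum_congr rfl fun j _ => by ring

theorem HasRatMoments.summable_mul_rate_mul_monomial (hmom : HasRatMoments o π D)
    (ha : ∀ j x, a j x = eval (fun i => (x i : ℝ)) (s j) / eval (fun i => (x i : ℝ)) o)
    (j : Fin m) (α : Fin n →₀ ℕ) (hdeg : (s j).totalDegree + ∑ i, α i ≤ D) :
    Summable fun x => π x * a j x * ∏ i, (x i : ℝ) ^ α i := by
  have hmon := totalDegree_prod_pow_le (fun i => (totalDegree_X (R := ℝ) i).le) α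
  refine (hmom.hasSum_eval _ ((totalDegree_mul _ _).trans
    ((add_le_add le_rfl hmon).trans hdeg))).summable.congr fun x => ?_
  simp only [ha, map_mul, map_prod, map_pow, eval_X]
  ring

theorem hasSum_eval_momentPoly_div_mul_eq_zero
    (hda : ∀ j, (s j).totalDegree ≤ da)
    (ha : ∀ j x, a j x = eval (fun i => (x i : ℝ)) (s j) / eval (fun i => (x i : ℝ)) o)
    (ha_nonneg : ∀ j, ∀ x ∈ S, 0 ≤ a j x)
    (hclosed : ∀ x ∈ S, ∀ j, a j x ≠ 0 → ∃ y ∈ S, ∀ i, (y i : ℤ) = (x i : ℤ) + v j i)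
    (hq_offdiag : ∀ x y, y ≠ x →
      q x y = ∑ j ∈ Finset.univ.filter (fun j => ∀ i, (y i : ℤ) = (x i : ℤ) + v j i), a j x)
    (hq_diag : ∀ x, q x x = -∑ j, a j x)
    (hπ_nonneg : ∀ x, 0 ≤ π x) (hπ_supp : ∀ x ∉ S, π x = 0)
    (hπ_stat : ∀ x ∈ S, HasSum (fun y => π y * q y x) 0)
    (hmom : HasRatMoments o π D) (α : Fin n →₀ ℕ) (hα : da + ∑ i, α i ≤ D) :
    HasSum (fun x => eval (fun i => (x i : ℝ)) (momentPoly v s α) /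
      eval (fun i => (x i : ℝ)) o * π x) 0 := by
  have hrate : ∀ j, Summable fun x => π x * a j x * ∏ i, (x i : ℝ) ^ α i := fun j =>
    hmom.summable_mul_rate_mul_monomial ha j α (by have := hda j; omega)
  have hrate₀ : ∀ j, Summable fun x => π x * a j x := fun j => by
    simpa using hmom.summable_mul_rate_mul_monomial ha j 0
      (by simp only [Finsupp.coe_zero, Pi.zero_apply, Finset.sum_const_zero]; have := hda j; omega)
  have hloop := mul_selfLoopRate_eq_zero hq_offdiag hq_diag ha_nonneg hclosed hπ_nonneg hπ_supp
    hπ_stat hrate₀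
  have hgen := hasSum_mul_generator_sub_selfLoopRate hq_offdiag hq_diag ha_nonneg hclosed
    hπ_nonneg hπ_supp hπ_stat (g := fun ξ => ∏ i, ξ i ^ α i) (fun x => by positivity) hrate
    ((hmom.hasSum_eval _ ((totalDegree_momentPoly_le hda α).trans hα)).summable.congr
      (eval_momentPoly_div_mul ha α))
  refine hgen.congr_fun fun x => ?_
  rw [eval_momentPoly_div_mul ha, mul_sub, ← mul_assoc, hloop, zero_mul, sub_zero]

end MomentEquations

/-- **Statement 4** (Theorem 1 of the paper).  For a reaction network on `S ⊆ ℕⁿ` with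
rational propensities `aⱼ = sⱼ/o` and `d ≥ d_o`, every stationary solution `π` of the
CME with finite rational moments of order up to `d + 1` has its vector of rational
moments `z = (z_β)` in the spectrahedron `𝓔^d`. -/
theorem stationary_moments_in_spectrahedron
    {n m : ℕ} (S : Set (Fin n → ℕ))
    (v : Fin m → Fin n → ℤ) (s : Fin m → MvPolynomial (Fin n) ℝ)
    (o : MvPolynomial (Fin n) ℝ) (d da : ℕ)
    (ho_pos : ∀ x ∈ S, 0 < eval (fun i => (x i : ℝ)) o)
    (hdo : o.totalDegree ≤ d)
    (hda : ∀ j, (s j).totalDegree ≤ da)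
    (a : Fin m → (Fin n → ℕ) → ℝ)
    (ha : ∀ j x, a j x = eval (fun i => (x i : ℝ)) (s j) / eval (fun i => (x i : ℝ)) o)
    (ha_nonneg : ∀ j, ∀ x ∈ S, 0 ≤ a j x)
    (hclosed : ∀ x ∈ S, ∀ j, a j x ≠ 0 → ∃ y ∈ S, ∀ i, (y i : ℤ) = (x i : ℤ) + v j i)
    (q : (Fin n → ℕ) → (Fin n → ℕ) → ℝ)
    (hq_offdiag : ∀ x y, y ≠ x →
      q x y = ∑ j ∈ Finset.univ.filter (fun j => ∀ i, (y i : ℤ) = (x i : ℤ) + v j i), a j x)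
    (hq_diag : ∀ x, q x x = -∑ j, a j x)
    (π : (Fin n → ℕ) → ℝ) (hπ_nonneg : ∀ x, 0 ≤ π x) (hπ_supp : ∀ x ∉ S, π x = 0)
    (hπ_mass : HasSum π 1)
    (hπ_stat : ∀ x ∈ S, HasSum (fun y => π y * q y x) 0)
    (hmom : HasRatMoments o π (d + 1)) :
    (fun β => ratMoment o π β) ∈ spectrahedron v s o da d := by
  refine ⟨?_, fun α hα => ?_, fun g hg => ?_, fun i₀ g hg => ?_⟩
  · refine (hmom.hasSum_eval o (by omega)).unique (hπ_mass.congr_fun fun x => ?_)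
    by_cases hx : x ∈ S
    · rw [div_self (ho_pos x hx).ne', one_mul]
    · rw [hπ_supp x hx, mul_zero]
  · have hα' : da + ∑ i, α i ≤ d + 1 := by
      have : ((∑ i, α i : ℕ) : ℤ) ≤ d - da + 1 := by exact_mod_cast hα
      omega
    exact (hmom.hasSum_eval _ ((totalDegree_momentPoly_le hda α).trans hα')).unique
      (hasSum_eval_momentPoly_div_mul_eq_zero hda ha ha_nonneg hclosed hq_offdiag hq_diag
        hπ_nonneg hπ_supp hπ_stat hmom α hα')
  · simpa using localisingForm_ratMoment_nonneg ho_pos hπ_nonneg hπ_supp hmom g 0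
      (by simp only [Finsupp.coe_zero, Pi.zero_apply, Finset.sum_const_zero]; omega)
  · exact localisingForm_ratMoment_nonneg ho_pos hπ_nonneg hπ_supp hmom g (Finsupp.single i₀ 1)
      (by rw [Finsupp.univ_sum_single_apply]; omega)
end

section
/- (Lemma: outer approximations of P_{w,c}.) Let Q be a rate matrix on a countable state space S, w : S → [0,∞) a norm-like function, and c a constant. If π belongs to P_{w,c}, then its restriction π_{|r} to the truncation S_r belongs to P^r_{w,c} for every r > 0; in particular π_{|r} ≥ 0, π_{|r}(x) = 0 for x ∉ S_r, π_{|r}Q(x) = 0 for every x ∈ N_r, 1 − c/r ≤ ∑_{x∈S} π_{|r}(x) ≤ 1, and ∑_{x∈S} w(x)π_{|r}(x) ≤ c. -/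
open scoped Classical

open Filter

/-- The set `P_{w,c}` of stationary solutions `π` of the CME for the rate matrix `q`
(`π ≥ 0`, `∑ π = 1`, `πQ(x) = 0` for all `x`) satisfying the moment bound `⟨w⟩ ≤ c`. -/
def statSet {σ : Type*} (q : σ → σ → ℝ) (w : σ → ℝ) (c : ℝ) : Set (σ → ℝ) :=
  {π | (∀ x, 0 ≤ π x) ∧ HasSum π 1 ∧ (∀ x, HasSum (fun y => π y * q y x) 0) ∧
    Summable (fun x => w x * π x) ∧ (∑' x, w x * π x) ≤ c}

/-- The truncation `S_r = {x : w(x) < r}`. -/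
def truncSet {σ : Type*} (w : σ → ℝ) (r : ℝ) : Set σ := {x | w x < r}

/-- The set `N_r` of states of `S_r` whose stationary equation only involves states of
`S_r`. -/
def eqStates {σ : Type*} (q : σ → σ → ℝ) (w : σ → ℝ) (r : ℝ) : Set σ :=
  {x | w x < r ∧ ∀ z, q z x ≠ 0 → w z < r}

/-- The outer approximation `P^r_{w,c}`: all `π^r ≥ 0` vanishing outside `S_r` with
`π^r Q(x) = 0` for `x ∈ N_r`, `1 - c/r ≤ ∑ π^r ≤ 1` and `∑ w π^r ≤ c`. -/
def truncPolytope {σ : Type*} (q : σ → σ → ℝ) (w : σ → ℝ) (c r : ℝ) : Set (σ → ℝ) :=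
  {ρ | (∀ x, 0 ≤ ρ x) ∧ (∀ x, ¬ w x < r → ρ x = 0) ∧
    (∀ x ∈ eqStates q w r, ∑' y, ρ y * q y x = 0) ∧
    1 - c / r ≤ ∑' x, ρ x ∧ (∑' x, ρ x) ≤ 1 ∧ (∑' x, w x * ρ x) ≤ c}

/-- The total variation distance `‖ρ₁ - ρ₂‖ = sup_{A ⊆ S} |∑_{x ∈ A} (ρ₁(x) - ρ₂(x))|`. -/
noncomputable def tvDist {σ : Type*} (ρ₁ ρ₂ : σ → ℝ) : ℝ :=
  ⨆ A : Set σ, |∑' x : A, (ρ₁ x - ρ₂ x)|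

/- Restricting `π` to `S_r` keeps nonnegativity and only lowers both `∑ π` and
`∑ w π`. On `N_r` every state feeding into `x` lies in `S_r`, so the truncated stationary equation
at `x` is the original one. The mass `π` places off `S_r` is at most `c / r` by Markov's
inequality, since `w ≥ r` there. -/

section IndicatorSums

variable {σ : Type*} {f : σ → ℝ}

theorem tsum_indicator_add_tsum_indicator_compl (hf : Summable f) (s : Set σ) :
    ∑' x, s.indicator f x + ∑' x, sᶜ.indicator f x = ∑' x, f x := by
  rw [← (hf.indicator s).tsum_add (hf.indicator sᶜ)]
  exact congrArg tsum (s.indicator_self_add_compl f)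

theorem tsum_indicator_le_tsum (hf : 0 ≤ f) (hsum : Summable f) (s : Set σ) :
    ∑' x, s.indicator f x ≤ ∑' x, f x :=
  (hsum.indicator s).tsum_mono hsum (Set.indicator_le_self' fun x _ => hf x)

theorem mul_tsum_indicator_compl_truncSet_le_tsum_mul {w : σ → ℝ} (hf : 0 ≤ f) (hw : 0 ≤ w)
    (hsum : Summable f) (hwf : Summable fun x => w x * f x) (r : ℝ) :
    r * ∑' x, (truncSet w r)ᶜ.indicator f x ≤ ∑' x, w x * f x := by
  rw [← tsum_mul_left]
  refine ((hsum.indicator _).mul_left r).tsum_le_tsum (fun x => ?_) hwf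
  by_cases hx : x ∈ (truncSet w r)ᶜ
  · rw [Set.indicator_of_mem hx]
    exact mul_le_mul_of_nonneg_right (not_lt.mp hx) (hf x)
  · rw [Set.indicator_of_notMem hx, mul_zero]
    exact mul_nonneg (hw x) (hf x)

end IndicatorSums

section Truncation

variable {σ : Type*} {q : σ → σ → ℝ} {w π : σ → ℝ} {c r : ℝ}

theorem tsum_indicator_truncSet_mul_rate_eq_zero (hπ : π ∈ statSet q w c) {x : σ}
    (hx : x ∈ eqStates q w r) : ∑' y, (truncSet w r).indicator π y * q y x = 0 := by
  rw [← (hπ.2.2.1 x).tsum_eq]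
  refine congrArg tsum (funext fun y => ?_)
  by_cases hy : y ∈ truncSet w r
  · rw [Set.indicator_of_mem hy]
  · have hqyx : q y x = 0 := not_not.mp (mt (hx.2 y) hy)
    rw [hqyx, mul_zero, mul_zero]

theorem one_sub_div_le_tsum_indicator_truncSet (hw : 0 ≤ w) (hπ : π ∈ statSet q w c)
    (hr : 0 < r) : 1 - c / r ≤ ∑' x, (truncSet w r).indicator π x := by
  obtain ⟨hπ_nonneg, hπ_one, -, hwπ, hwπ_le⟩ := hπ
  have tail_le : ∑' x, (truncSet w r)ᶜ.indicator π x ≤ c / r := by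
    rw [le_div_iff₀' hr]
    exact (mul_tsum_indicator_compl_truncSet_le_tsum_mul hπ_nonneg hw hπ_one.summable hwπ r).trans
      hwπ_le
  have split := tsum_indicator_add_tsum_indicator_compl hπ_one.summable (truncSet w r)
  rw [hπ_one.tsum_eq] at split
  linarith

theorem tsum_mul_indicator_truncSet_le (hw : 0 ≤ w) (hπ : π ∈ statSet q w c) :
    ∑' x, w x * (truncSet w r).indicator π x ≤ c := by
  obtain ⟨hπ_nonneg, -, -, hwπ, hwπ_le⟩ := hπ
  simp only [← Set.indicator_mul_right]
  exact (tsum_indicator_le_tsum (fun x => mul_nonneg (hw x) (hπ_nonneg x)) hwπ _).trans hwπ_le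

end Truncation

theorem restriction_mem_truncPolytope_general
    {σ : Type*} (q : σ → σ → ℝ)
    (w : σ → ℝ) (hw_nonneg : ∀ x, 0 ≤ w x)
    (c : ℝ) (π : σ → ℝ) (hπ : π ∈ statSet q w c)
    (r : ℝ) (hr : 0 < r) :
    (truncSet w r).indicator π ∈ truncPolytope q w c r :=
  ⟨Set.indicator_nonneg fun x _ => hπ.1 x,
    fun _ hx => Set.indicator_of_notMem (s := truncSet w r) hx π,
    fun _ hx => tsum_indicator_truncSet_mul_rate_eq_zero hπ hx,
    one_sub_div_le_tsum_indicator_truncSet hw_nonneg hπ hr,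
    (tsum_indicator_le_tsum hπ.1 hπ.2.1.summable _).trans_eq hπ.2.1.tsum_eq,
    tsum_mul_indicator_truncSet_le hw_nonneg hπ⟩

/-- Lemma: outer approximations of `P_{w,c}`.
Let `Q` be a rate matrix on a countable state space, `w` norm-like and `c` a constant.
If `π ∈ P_{w,c}`, then its restriction `π_{|r}` to the truncation `S_r` belongs to
`P^r_{w,c}` for every `r > 0`; in particular `π_{|r} ≥ 0`, `π_{|r}` vanishes off `S_r`,
`π_{|r} Q(x) = 0` for `x ∈ N_r`, `1 - c/r ≤ ∑ π_{|r} ≤ 1`, and `∑ w π_{|r} ≤ c`. -/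
theorem restriction_mem_truncPolytope
    {σ : Type*} [Countable σ] (q : σ → σ → ℝ)
    (hq_offdiag : ∀ x y : σ, x ≠ y → 0 ≤ q x y)
    (hq_row : ∀ x : σ, HasSum (fun y => if y = x then 0 else q x y) (-(q x x)))
    (w : σ → ℝ) (hw_nonneg : ∀ x, 0 ≤ w x)
    (hw_norm : ∀ r : ℝ, (truncSet w r).Finite)
    (c : ℝ) (π : σ → ℝ) (hπ : π ∈ statSet q w c)
    (r : ℝ) (hr : 0 < r) :
    (truncSet w r).indicator π ∈ truncPolytope q w c r :=
  restriction_mem_truncPolytope_general q w hw_nonneg c π hπ r hr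
end

section
/- (Theorem on LP bounds for stationary averages, convergence part.) Let Q be a rate matrix on a countable state space S such that {z ∈ S : q(z,x) ≠ 0} is finite for every x ∈ S, let w be norm-like, suppose P_{w,c} is non-empty, and let f : S → ℝ satisfy lim_{r→∞} sup_{x∉S_r}(|f(x)|/w(x)) = 0. Then lim_{r→∞} l^r_f = l_f := inf{⟨f⟩_π : π ∈ P_{w,c}} and lim_{r→∞} u^r_f = u_f := sup{⟨f⟩_π : π ∈ P_{w,c}}, where l^r_f := inf{∑_x f(x)π^r(x) : π^r ∈ P^r_{w,c}} and u^r_f := sup{∑_x f(x)π^r(x) : π^r ∈ P^r_{w,c}}. -/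
open scoped Classical

open Filter

/-!
Truncating a stationary `π` to `S_r` gives an element of `P^r_{w,c}` (Markov's inequality bounds
the lost mass by `c / r`), and the moment bound `⟨w⟩ ≤ c` makes the tail of `⟨f⟩` uniformly small,
so every value `⟨f⟩_π` is approximated by a value of the truncated problem. Conversely, both
`P_{w,c}` and all `P^r_{w,c}` lie in the set of sub-probability vectors with `⟨w⟩ ≤ c`, which is
compact in the product topology, and `ρ ↦ ⟨f⟩_ρ` is continuous there as a uniform limit of finite
sums. A limit of elements of `P^{r_k}` with `r_k → ∞` is stationary since every column of `Q` has
finite support, and has mass one since the mass is continuous as well. So the value sets converge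
in the Hausdorff sense, and so do their infima and suprema.
-/

open Set Topology

section HausdorffApprox

variable {α ι : Type*} {l : Filter ι} {F : α → ℝ} {A : ι → Set α} {B : Set α}

theorem tendsto_csInf_image_of_approx (hB : B.Nonempty) (hBb : BddBelow (F '' B))
    (hBA : ∀ ε > 0, ∀ᶠ i in l, ∀ b ∈ B, ∃ a ∈ A i, dist (F a) (F b) ≤ ε)
    (hAB : ∀ ε > 0, ∀ᶠ i in l, ∀ a ∈ A i, ∃ b ∈ B, dist (F a) (F b) ≤ ε) :
    Tendsto (fun i => sInf (F '' A i)) l (𝓝 (sInf (F '' B))) := by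
  have hlow : ∀ ε > 0, ∀ᶠ i in l, ∀ a ∈ A i, sInf (F '' B) - ε ≤ F a := fun ε hε =>
    (hAB ε hε).mono fun i hi a ha => by
      obtain ⟨b, hb, hab⟩ := hi a ha
      rw [Real.dist_eq, abs_le] at hab
      linarith [csInf_le hBb (mem_image_of_mem F hb)]
  refine tendsto_order.2 ⟨fun u hu => ?_, fun u hu => ?_⟩
  · filter_upwards [hBA 1 one_pos, hlow _ (half_pos (sub_pos.2 hu))] with i hne hi
    obtain ⟨a, ha, -⟩ := hne _ hB.some_mem
    linarith [le_csInf ⟨_, mem_image_of_mem F ha⟩ (forall_mem_image.2 hi)]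
  · obtain ⟨_, ⟨b, hb, rfl⟩, hbu⟩ := exists_lt_of_csInf_lt (hB.image F) hu
    filter_upwards [hBA _ (half_pos (sub_pos.2 hbu)), hlow 1 one_pos] with i hi hbdd
    obtain ⟨a, ha, hab⟩ := hi b hb
    rw [Real.dist_eq, abs_le] at hab
    linarith [csInf_le ⟨_, forall_mem_image.2 hbdd⟩ (mem_image_of_mem F ha)]

theorem tendsto_csSup_image_of_approx (hB : B.Nonempty) (hBb : BddAbove (F '' B))
    (hBA : ∀ ε > 0, ∀ᶠ i in l, ∀ b ∈ B, ∃ a ∈ A i, dist (F a) (F b) ≤ ε)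
    (hAB : ∀ ε > 0, ∀ᶠ i in l, ∀ a ∈ A i, ∃ b ∈ B, dist (F a) (F b) ≤ ε) :
    Tendsto (fun i => sSup (F '' A i)) l (𝓝 (sSup (F '' B))) := by
  have himage : ∀ S : Set α, (fun a => -F a) '' S = -(F '' S) := fun S => by
    rw [← image_neg_eq_neg, image_image]
  have := tendsto_csInf_image_of_approx (F := fun a => -F a) hB
    (by rw [himage]; exact hBb.neg) (by simpa only [dist_neg_neg] using hBA)
    (by simpa only [dist_neg_neg] using hAB)
  simpa only [himage, Real.sInf_neg, neg_neg] using this.neg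

end HausdorffApprox

section SubProbMoment

variable {σ : Type*} {w : σ → ℝ} {c : ℝ}

/-- Stated through finite partial sums rather than `tsum`s, so that it is closed in the product
topology. -/
def subProbMoment (w : σ → ℝ) (c : ℝ) : Set (σ → ℝ) :=
  {g | (∀ x, 0 ≤ g x) ∧ ∀ s : Finset σ, ∑ x ∈ s, g x ≤ 1 ∧ ∑ x ∈ s, w x * g x ≤ c}

theorem isClosed_subProbMoment : IsClosed (subProbMoment w c) := by
  simp only [subProbMoment, ofPred_and, ofPred_forall]
  exact (isClosed_iInter fun x => isClosed_le continuous_const (continuous_apply x)).inter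
    (isClosed_iInter fun s => (isClosed_le (by fun_prop) continuous_const).inter
      (isClosed_le (by fun_prop) continuous_const))

theorem subProbMoment_subset_pi : subProbMoment w c ⊆ univ.pi fun _ => Icc 0 1 :=
  fun _ hg x _ => ⟨hg.1 x, by simpa using (hg.2 {x}).1⟩

theorem isCompact_subProbMoment : IsCompact (subProbMoment w c) :=
  (isCompact_univ_pi fun _ => isCompact_Icc).of_isClosed_subset isClosed_subProbMoment
    subProbMoment_subset_pi

theorem summable_of_mem_subProbMoment {g : σ → ℝ} (hg : g ∈ subProbMoment w c) : Summable g :=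
  summable_of_sum_le hg.1 fun s => (hg.2 s).1

theorem tsum_le_one_of_mem_subProbMoment {g : σ → ℝ} (hg : g ∈ subProbMoment w c) :
    ∑' x, g x ≤ 1 :=
  Real.tsum_le_of_sum_le hg.1 fun s => (hg.2 s).1

theorem summable_weight_mul_of_mem_subProbMoment (hw0 : ∀ x, 0 ≤ w x) {g : σ → ℝ}
    (hg : g ∈ subProbMoment w c) : Summable fun x => w x * g x :=
  summable_of_sum_le (fun x => mul_nonneg (hw0 x) (hg.1 x)) fun s => (hg.2 s).2

theorem tsum_weight_mul_le_of_mem_subProbMoment (hw0 : ∀ x, 0 ≤ w x) {g : σ → ℝ}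
    (hg : g ∈ subProbMoment w c) : ∑' x, w x * g x ≤ c :=
  Real.tsum_le_of_sum_le (fun x => mul_nonneg (hw0 x) (hg.1 x)) fun s => (hg.2 s).2

theorem mem_subProbMoment_of_tsum_le (hw0 : ∀ x, 0 ≤ w x) {g : σ → ℝ} (hg0 : ∀ x, 0 ≤ g x)
    (hg : Summable g) (hg1 : ∑' x, g x ≤ 1) (hwg : Summable fun x => w x * g x)
    (hwgc : ∑' x, w x * g x ≤ c) : g ∈ subProbMoment w c :=
  ⟨hg0, fun s => ⟨(hg.sum_le_tsum s fun x _ => hg0 x).trans hg1,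
    (hwg.sum_le_tsum s fun x _ => mul_nonneg (hw0 x) (hg0 x)).trans hwgc⟩⟩

theorem statSet_subset_subProbMoment {q : σ → σ → ℝ} (hw0 : ∀ x, 0 ≤ w x) :
    statSet q w c ⊆ subProbMoment w c :=
  fun _ ⟨h0, h1, _, hws, hwc⟩ =>
    mem_subProbMoment_of_tsum_le hw0 h0 h1.summable h1.tsum_eq.le hws hwc

theorem summable_of_eq_zero_of_not_lt {r : ℝ} (hw : (truncSet w r).Finite) {g : σ → ℝ}
    (hg : ∀ x, ¬ w x < r → g x = 0) : Summable g :=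
  summable_of_hasFiniteSupport <| hw.subset fun x hx => by_contra fun h => hx (hg x h)

theorem truncPolytope_subset_subProbMoment {q : σ → σ → ℝ} {r : ℝ} (hw0 : ∀ x, 0 ≤ w x)
    (hw : (truncSet w r).Finite) : truncPolytope q w c r ⊆ subProbMoment w c :=
  fun _ ⟨h0, hsupp, _, _, h1, hwc⟩ => mem_subProbMoment_of_tsum_le hw0 h0
    (summable_of_eq_zero_of_not_lt hw hsupp) h1
    (summable_of_eq_zero_of_not_lt hw fun x hx => by rw [hsupp x hx, mul_zero]) hwc

theorem abs_tsum_mul_sub_sum_le (hw0 : ∀ x, 0 ≤ w x) {f g : σ → ℝ} {s : Finset σ} {ε : ℝ}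
    (hε : 0 ≤ ε) (hg : ∀ x, 0 ≤ g x) (hfg : Summable fun x => f x * g x)
    (hwg : Summable fun x => w x * g x) (hs : ∀ x ∉ s, |f x| ≤ ε * w x) :
    |∑' x, f x * g x - ∑ x ∈ s, f x * g x| ≤ ε * ∑' x, w x * g x := by
  rw [← hfg.sum_add_tsum_compl (s := s), add_sub_cancel_left]
  calc |∑' x : ↥((s : Set σ)ᶜ), f x * g x| ≤ ε * ∑' x : ↥((s : Set σ)ᶜ), w x * g x := by
        rw [← Real.norm_eq_abs]
        refine tsum_of_norm_bounded ((hwg.subtype _).hasSum.mul_left ε) fun x => ?_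
        rw [Real.norm_eq_abs, Function.comp_apply, abs_mul, abs_of_nonneg (hg x), ← mul_assoc]
        exact mul_le_mul_of_nonneg_right (hs x x.2) (hg x)
    _ ≤ ε * ∑' x, w x * g x := mul_le_mul_of_nonneg_left
        (hwg.tsum_subtype_le _ _ fun x => mul_nonneg (hw0 x) (hg x)) hε

theorem summable_mul_of_mem_subProbMoment (hw0 : ∀ x, 0 ≤ w x) {r : ℝ}
    (hw : (truncSet w r).Finite) {f : σ → ℝ} (hf : ∀ x, ¬ w x < r → |f x| ≤ w x) {g : σ → ℝ}
    (hg : g ∈ subProbMoment w c) : Summable fun x => f x * g x := by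
  refine (summable_weight_mul_of_mem_subProbMoment hw0 hg).of_norm_bounded_eventually ?_
  filter_upwards [hw.compl_mem_cofinite] with x hx
  rw [Real.norm_eq_abs, abs_mul, abs_of_nonneg (hg.1 x)]
  exact mul_le_mul_of_nonneg_right (hf x hx) (hg.1 x)

theorem tendstoUniformlyOn_sum_truncSet (hw0 : ∀ x, 0 ≤ w x)
    (hw : ∀ r : ℝ, (truncSet w r).Finite) {f : σ → ℝ}
    (hf : ∀ ε : ℝ, 0 < ε → ∃ r₀ : ℝ, ∀ x, ¬ w x < r₀ → |f x| ≤ ε * w x) :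
    TendstoUniformlyOn (fun r (g : σ → ℝ) => ∑ x ∈ (hw r).toFinset, f x * g x)
      (fun g => ∑' x, f x * g x) atTop (subProbMoment w c) := by
  rw [Metric.tendstoUniformlyOn_iff]
  intro ε hε
  obtain ⟨r₁, hr₁⟩ := hf 1 one_pos
  set δ := ε / (|c| + 1)
  have hδ : 0 < δ := by positivity
  obtain ⟨r₀, hr₀⟩ := hf δ hδ
  filter_upwards [eventually_ge_atTop r₀] with r hr g hg
  have hs : ∀ x ∉ (hw r).toFinset, |f x| ≤ δ * w x := fun x hx =>
    hr₀ x fun h => hx ((hw r).mem_toFinset.2 (h.trans_le hr))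
  rw [Real.dist_eq]
  calc |∑' x, f x * g x - ∑ x ∈ (hw r).toFinset, f x * g x| ≤ δ * ∑' x, w x * g x :=
        abs_tsum_mul_sub_sum_le hw0 hδ.le hg.1
          (summable_mul_of_mem_subProbMoment hw0 (hw r₁) (by simpa using hr₁) hg)
          (summable_weight_mul_of_mem_subProbMoment hw0 hg) hs
    _ ≤ δ * |c| := mul_le_mul_of_nonneg_left
        ((tsum_weight_mul_le_of_mem_subProbMoment hw0 hg).trans (le_abs_self c)) hδ.le
    _ < ε := by
        rw [div_mul_eq_mul_div, div_lt_iff₀ (by positivity)]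
        nlinarith

theorem continuousOn_tsum_mul (hw0 : ∀ x, 0 ≤ w x) (hw : ∀ r : ℝ, (truncSet w r).Finite)
    {f : σ → ℝ} (hf : ∀ ε : ℝ, 0 < ε → ∃ r₀ : ℝ, ∀ x, ¬ w x < r₀ → |f x| ≤ ε * w x) :
    ContinuousOn (fun g => ∑' x, f x * g x) (subProbMoment w c) :=
  (tendstoUniformlyOn_sum_truncSet hw0 hw hf).continuousOn
    (Frequently.of_forall fun _ => by fun_prop)

theorem tendsto_tsum_mul_of_tendsto (hw0 : ∀ x, 0 ≤ w x) (hw : ∀ r : ℝ, (truncSet w r).Finite)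
    {f : σ → ℝ} (hf : ∀ ε : ℝ, 0 < ε → ∃ r₀ : ℝ, ∀ x, ¬ w x < r₀ → |f x| ≤ ε * w x)
    {ι : Type*} {l : Filter ι} [l.NeBot] {ρ : ι → σ → ℝ} {π : σ → ℝ}
    (hρ : ∀ i, ρ i ∈ subProbMoment w c) (hlim : Tendsto ρ l (𝓝 π)) :
    Tendsto (fun i => ∑' x, f x * ρ i x) l (𝓝 (∑' x, f x * π x)) :=
  (continuousOn_tsum_mul hw0 hw hf π
    (isClosed_subProbMoment.mem_of_tendsto hlim (Eventually.of_forall hρ))).tendsto.comp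
    (tendsto_nhdsWithin_iff.2 ⟨hlim, Eventually.of_forall hρ⟩)

end SubProbMoment

section Truncation

variable {σ : Type*} {q : σ → σ → ℝ} {w : σ → ℝ} {c r : ℝ}

theorem tsum_mul_indicator_truncSet (hw : (truncSet w r).Finite) (f g : σ → ℝ) :
    ∑' x, f x * (truncSet w r).indicator g x = ∑ x ∈ hw.toFinset, f x * g x := by
  rw [tsum_eq_sum fun x hx => by rw [indicator_of_notMem (mt hw.mem_toFinset.2 hx), mul_zero]]
  exact Finset.sum_congr rfl fun x hx => by rw [indicator_of_mem (hw.mem_toFinset.1 hx)]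

theorem tsum_sub_tsum_indicator_truncSet_le (hw0 : ∀ x, 0 ≤ w x) (hr : 0 < r) {g : σ → ℝ}
    (hg0 : ∀ x, 0 ≤ g x) (hg : Summable g) (hwg : Summable fun x => w x * g x) :
    ∑' x, g x - ∑' x, (truncSet w r).indicator g x ≤ (∑' x, w x * g x) / r := by
  have hle : ∀ x, g x - (truncSet w r).indicator g x ≤ w x * g x / r := fun x => by
    by_cases hx : w x < r
    · rw [indicator_of_mem (show x ∈ truncSet w r from hx), sub_self]
      exact div_nonneg (mul_nonneg (hw0 x) (hg0 x)) hr.le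
    · rw [indicator_of_notMem (show x ∉ truncSet w r from hx), sub_zero, le_div_iff₀ hr, mul_comm]
      exact mul_le_mul_of_nonneg_right (not_lt.1 hx) (hg0 x)
  rw [← hg.tsum_sub (hg.indicator _), ← tsum_div_const]
  exact (hg.sub (hg.indicator _)).tsum_le_tsum hle (hwg.div_const r)

theorem indicator_truncSet_mem_truncPolytope (hw0 : ∀ x, 0 ≤ w x) {π : σ → ℝ}
    (hπ : π ∈ statSet q w c) (hr : 0 < r) :
    (truncSet w r).indicator π ∈ truncPolytope q w c r := by
  obtain ⟨h0, h1, hstat, hws, hwc⟩ := hπ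
  have hnn : ∀ x, 0 ≤ (truncSet w r).indicator π x := indicator_nonneg fun x _ => h0 x
  have hle : ∀ x, (truncSet w r).indicator π x ≤ π x := indicator_le_self' fun x _ => h0 x
  have hwle : ∀ x, w x * (truncSet w r).indicator π x ≤ w x * π x := fun x =>
    mul_le_mul_of_nonneg_left (hle x) (hw0 x)
  refine ⟨hnn, fun x hx => indicator_of_notMem (show x ∉ truncSet w r from hx) π,
    fun x hx => ?_, ?_, ?_, ?_⟩
  · rw [← (hstat x).tsum_eq]
    refine tsum_congr fun y => ?_
    by_cases hq : q y x = 0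
    · rw [hq, mul_zero, mul_zero]
    · rw [indicator_of_mem (show y ∈ truncSet w r from hx.2 y hq)]
  · have hmarkov := tsum_sub_tsum_indicator_truncSet_le hw0 hr h0 h1.summable hws
    rw [h1.tsum_eq] at hmarkov
    linarith [div_le_div_of_nonneg_right hwc hr.le]
  · exact ((h1.summable.indicator _).tsum_le_tsum hle h1.summable).trans h1.tsum_eq.le
  · exact ((hws.of_nonneg_of_le (fun x => mul_nonneg (hw0 x) (hnn x)) hwle).tsum_le_tsum hwle
      hws).trans hwc

end Truncation

section Limits

variable {σ : Type*} {q : σ → σ → ℝ} {w : σ → ℝ} {c : ℝ}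

theorem hasSum_mul_rate_of_tendsto (hq_fin : ∀ x : σ, {z : σ | q z x ≠ 0}.Finite)
    {r : ℕ → ℝ} (hr : Tendsto r atTop atTop) {ρ : ℕ → σ → ℝ}
    (hρ : ∀ k, ρ k ∈ truncPolytope q w c (r k)) {π : σ → ℝ} (hlim : Tendsto ρ atTop (𝓝 π))
    (x : σ) : HasSum (fun y => π y * q y x) 0 := by
  set Z := (hq_fin x).toFinset
  have hZ : ∀ y ∉ Z, q y x = 0 := fun y hy => not_not.1 (mt (hq_fin x).mem_toFinset.2 hy)
  have hsum : HasSum (fun y => π y * q y x) (∑ y ∈ Z, π y * q y x) :=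
    hasSum_sum_of_ne_finset_zero fun y hy => by rw [hZ y hy, mul_zero]
  have htend : Tendsto (fun k => ∑ y ∈ Z, ρ k y * q y x) atTop (𝓝 (∑ y ∈ Z, π y * q y x)) :=
    tendsto_finsetSum Z fun y _ => ((continuous_apply y).tendsto π |>.comp hlim).mul_const _
  obtain ⟨B, hB⟩ := (((hq_fin x).insert x).image w).bddAbove
  have hzero : ∀ᶠ k in atTop, 0 = ∑ y ∈ Z, ρ k y * q y x := by
    filter_upwards [hr.eventually_gt_atTop B] with k hk
    have hx : x ∈ eqStates q w (r k) :=
      ⟨(hB (mem_image_of_mem w (mem_insert x _))).trans_lt hk,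
        fun z hz => (hB (mem_image_of_mem w (mem_insert_of_mem x hz))).trans_lt hk⟩
    rw [← (hρ k).2.2.1 x hx, tsum_eq_sum fun y hy => by rw [hZ y hy, mul_zero]]
  rwa [tendsto_nhds_unique htend (tendsto_const_nhds.congr' hzero)] at hsum

theorem mem_statSet_of_tendsto (hq_fin : ∀ x : σ, {z : σ | q z x ≠ 0}.Finite)
    (hw0 : ∀ x, 0 ≤ w x) (hw : ∀ r : ℝ, (truncSet w r).Finite)
    {r : ℕ → ℝ} (hr : Tendsto r atTop atTop) {ρ : ℕ → σ → ℝ}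
    (hρ : ∀ k, ρ k ∈ truncPolytope q w c (r k)) {π : σ → ℝ} (hlim : Tendsto ρ atTop (𝓝 π)) :
    π ∈ statSet q w c := by
  have hK : ∀ k, ρ k ∈ subProbMoment w c := fun k =>
    truncPolytope_subset_subProbMoment hw0 (hw _) (hρ k)
  have hπ : π ∈ subProbMoment w c :=
    isClosed_subProbMoment.mem_of_tendsto hlim (Eventually.of_forall hK)
  have hmass : Tendsto (fun k => ∑' x, ρ k x) atTop (𝓝 (∑' x, π x)) := by
    have hone : ∀ ε : ℝ, 0 < ε → ∃ r₀ : ℝ, ∀ x, ¬ w x < r₀ → |(1 : ℝ)| ≤ ε * w x :=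
      fun ε hε => ⟨ε⁻¹, fun x hx => by
        rw [abs_one, ← div_le_iff₀' hε, one_div]; exact not_lt.1 hx⟩
    simpa only [one_mul] using tendsto_tsum_mul_of_tendsto hw0 hw hone hK hlim
  have hge : 1 ≤ ∑' x, π x :=
    le_of_tendsto_of_tendsto (by simpa using tendsto_const_nhds.sub (hr.const_div_atTop c))
      hmass (Eventually.of_forall fun k => (hρ k).2.2.2.1)
  refine ⟨hπ.1, ?_, hasSum_mul_rate_of_tendsto hq_fin hr hρ hlim,
    summable_weight_mul_of_mem_subProbMoment hw0 hπ,
    tsum_weight_mul_le_of_mem_subProbMoment hw0 hπ⟩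
  rw [← (tsum_le_one_of_mem_subProbMoment hπ).antisymm hge]
  exact (summable_of_mem_subProbMoment hπ).hasSum

theorem eventually_exists_truncPolytope_near (hw0 : ∀ x, 0 ≤ w x)
    (hw : ∀ r : ℝ, (truncSet w r).Finite) {f : σ → ℝ}
    (hf : ∀ ε : ℝ, 0 < ε → ∃ r₀ : ℝ, ∀ x, ¬ w x < r₀ → |f x| ≤ ε * w x) {ε : ℝ} (hε : 0 < ε) :
    ∀ᶠ n : ℕ in atTop, ∀ π ∈ statSet q w c, ∃ ρ ∈ truncPolytope q w c n,
      dist (∑' x, f x * ρ x) (∑' x, f x * π x) ≤ ε := by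
  have hunif := Metric.tendstoUniformlyOn_iff.1
    (tendstoUniformlyOn_sum_truncSet (c := c) hw0 hw hf) ε hε
  filter_upwards [tendsto_natCast_atTop_atTop.eventually hunif, eventually_gt_atTop 0]
    with n hn hn0 π hπ
  refine ⟨_, indicator_truncSet_mem_truncPolytope hw0 hπ (Nat.cast_pos.2 hn0), ?_⟩
  rw [tsum_mul_indicator_truncSet (hw n), dist_comm]
  exact (hn π (statSet_subset_subProbMoment hw0 hπ)).le

theorem eventually_exists_statSet_near [Countable σ]
    (hq_fin : ∀ x : σ, {z : σ | q z x ≠ 0}.Finite)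
    (hw0 : ∀ x, 0 ≤ w x) (hw : ∀ r : ℝ, (truncSet w r).Finite) {f : σ → ℝ}
    (hf : ∀ ε : ℝ, 0 < ε → ∃ r₀ : ℝ, ∀ x, ¬ w x < r₀ → |f x| ≤ ε * w x) {ε : ℝ} (hε : 0 < ε) :
    ∀ᶠ n : ℕ in atTop, ∀ ρ ∈ truncPolytope q w c n, ∃ π ∈ statSet q w c,
      dist (∑' x, f x * ρ x) (∑' x, f x * π x) ≤ ε := by
  by_contra hfar
  rw [not_eventually] at hfar
  push Not at hfar
  obtain ⟨φ, hφ, hbad⟩ := extraction_of_frequently_atTop hfar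
  choose ρ hρ hρfar using hbad
  have hK : ∀ k, ρ k ∈ subProbMoment w c := fun k =>
    truncPolytope_subset_subProbMoment hw0 (hw _) (hρ k)
  obtain ⟨π, -, ψ, hψ, hlim⟩ := isCompact_subProbMoment.tendsto_subseq hK
  have hπ : π ∈ statSet q w c := mem_statSet_of_tendsto hq_fin hw0 hw
    (tendsto_natCast_atTop_atTop.comp (hφ.comp hψ).tendsto_atTop) (fun k => hρ (ψ k)) hlim
  obtain ⟨k, hk⟩ := Metric.tendsto_atTop.1
    (tendsto_tsum_mul_of_tendsto hw0 hw hf (fun k => hK (ψ k)) hlim) ε hε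
  exact lt_asymm (hk k le_rfl) (hρfar (ψ k) π hπ)

end Limits

theorem lp_average_bounds_converge_general
    {σ : Type*} [Countable σ] (q : σ → σ → ℝ)
    (hq_fin : ∀ x : σ, {z : σ | q z x ≠ 0}.Finite)
    (w : σ → ℝ) (hw_nonneg : ∀ x, 0 ≤ w x)
    (hw_norm : ∀ r : ℝ, (truncSet w r).Finite)
    (c : ℝ) (hP : (statSet q w c).Nonempty)
    (f : σ → ℝ)
    (hf : ∀ ε : ℝ, 0 < ε → ∃ r₀ : ℝ, ∀ x, ¬ w x < r₀ → |f x| ≤ ε * w x) :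
    Tendsto (fun r : ℕ =>
        sInf ((fun ρ => ∑' x, f x * ρ x) '' truncPolytope q w c (r : ℝ)))
      atTop (nhds (sInf ((fun π => ∑' x, f x * π x) '' statSet q w c))) ∧
    Tendsto (fun r : ℕ =>
        sSup ((fun ρ => ∑' x, f x * ρ x) '' truncPolytope q w c (r : ℝ)))
      atTop (nhds (sSup ((fun π => ∑' x, f x * π x) '' statSet q w c))) := by
  have hvalues : IsCompact ((fun g => ∑' x, f x * g x) '' subProbMoment w c) :=
    isCompact_subProbMoment.image_of_continuousOn (continuousOn_tsum_mul hw_nonneg hw_norm hf)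
  have hsub : (fun g => ∑' x, f x * g x) '' statSet q w c ⊆ _ :=
    image_mono (statSet_subset_subProbMoment hw_nonneg)
  have hBA := fun ε (hε : 0 < ε) =>
    eventually_exists_truncPolytope_near (q := q) (c := c) hw_nonneg hw_norm hf hε
  have hAB := fun ε (hε : 0 < ε) =>
    eventually_exists_statSet_near (c := c) hq_fin hw_nonneg hw_norm hf hε
  exact ⟨tendsto_csInf_image_of_approx hP (hvalues.bddBelow.mono hsub) hBA hAB,
    tendsto_csSup_image_of_approx hP (hvalues.bddAbove.mono hsub) hBA hAB⟩

/-- **Statement 10** (LP bounds on stationary averages, convergence part).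
For a rate matrix `q` with `{z : q z x ≠ 0}` finite for every `x`, norm-like `w`,
non-empty `P_{w,c}` and `f : S → ℝ` with `sup_{x ∉ S_r} |f(x)|/w(x) → 0` as `r → ∞`,
the LP bounds `l^r_f` and `u^r_f` converge respectively to
`l_f = inf {⟨f⟩_π : π ∈ P_{w,c}}` and `u_f = sup {⟨f⟩_π : π ∈ P_{w,c}}`. -/
theorem lp_average_bounds_converge
    {σ : Type*} [Countable σ] (q : σ → σ → ℝ)
    (hq_offdiag : ∀ x y : σ, x ≠ y → 0 ≤ q x y)
    (hq_row : ∀ x : σ, HasSum (fun y => if y = x then 0 else q x y) (-(q x x)))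
    (hq_fin : ∀ x : σ, {z : σ | q z x ≠ 0}.Finite)
    (w : σ → ℝ) (hw_nonneg : ∀ x, 0 ≤ w x)
    (hw_norm : ∀ r : ℝ, (truncSet w r).Finite)
    (c : ℝ) (hP : (statSet q w c).Nonempty)
    (f : σ → ℝ)
    (hf : ∀ ε : ℝ, 0 < ε → ∃ r₀ : ℝ, ∀ x, ¬ w x < r₀ → |f x| ≤ ε * w x) :
    Tendsto (fun r : ℕ =>
        sInf ((fun ρ => ∑' x, f x * ρ x) '' truncPolytope q w c (r : ℝ)))
      atTop (nhds (sInf ((fun π => ∑' x, f x * π x) '' statSet q w c))) ∧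
    Tendsto (fun r : ℕ =>
        sSup ((fun ρ => ∑' x, f x * ρ x) '' truncPolytope q w c (r : ℝ)))
      atTop (nhds (sSup ((fun π => ∑' x, f x * π x) '' statSet q w c))) :=
  lp_average_bounds_converge_general q hq_fin w hw_nonneg hw_norm c hP f hf
end

section
/- (Foster–Lyapunov drift condition for Schlögl's model.) Let Q be the rate matrix of Schlögl's model with rate constants k₁,k₂,k₃,k₄ > 0. For every integer d ≥ 3 and w(x) := x^{d−2}, there exist constants K₁ ∈ ℝ and K₂ > 0 such that Qw(x) := ∑_{y∈ℕ} q(x,y) w(y) = (a₁(x)+a₃(x))((x+1)^{d−2} − x^{d−2}) + (a₂(x)+a₄(x))((x−1)^{d−2} − x^{d−2}) ≤ K₁ − K₂ x^{d−2} for all x ∈ ℕ. -/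
/-!
`Qw(x) + w(x)` behaves like `-k₂ (d - 2) x ^ d` for large `x`: the birth term is of order
`x ^ (d - 1)` and the death term of order `-x ^ d`, as the increments of `w` are squeezed by
`n b ^ (n - 1) (a - b) ≤ a ^ n - b ^ n ≤ n a ^ (n - 1) (a - b)` and `(t + 1) / (t - 1) ≤ 2`
for `t ≥ 3`. Hence `Qw + w ≤ 0` eventually, so it is bounded above on `ℕ`, and one can take
`K₂ = 1` and `K₁` such a bound.
-/

open Filter Finset

section PowSubPow

variable {α : Type*} [CommRing α] [LinearOrder α]

theorem pow_sub_pow_le_of_le [IsOrderedRing α] {a b : α} (hb : 0 ≤ b) (hab : b ≤ a) (n : ℕ) :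
    a ^ n - b ^ n ≤ (a - b) * n * a ^ (n - 1) := by
  have ha : 0 ≤ a := hb.trans hab
  simpa [abs_of_nonneg ha, abs_of_nonneg hb, abs_of_nonneg (sub_nonneg.2 hab), hab] using
    (le_abs_self _).trans (abs_pow_sub_pow_le a b n)

theorem sub_mul_pow_le_pow_sub_pow [IsStrictOrderedRing α] {a b : α} (hb : 0 ≤ b) (hab : b ≤ a)
    (n : ℕ) : (a - b) * n * b ^ (n - 1) ≤ a ^ n - b ^ n := by
  rw [← geom_sum₂_mul, mul_assoc, mul_comm]
  refine mul_le_mul_of_nonneg_right ?_ (sub_nonneg.2 hab)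
  have hterm : ∀ i ∈ range n, b ^ (n - 1) ≤ a ^ i * b ^ (n - 1 - i) := fun i hi => by
    rw [← pow_mul_pow_sub b (Nat.le_sub_one_of_lt (mem_range.1 hi))]
    exact mul_le_mul_of_nonneg_right (pow_le_pow_left₀ hb hab i) (pow_nonneg hb _)
  simpa using card_nsmul_le_sum (range n) _ _ hterm

end PowSubPow

/-- `Qw(t)` for Schlögl's model and `w(x) = x ^ n`. -/
def schloglDrift (k₁ k₂ k₃ k₄ : ℝ) (n : ℕ) (t : ℝ) : ℝ :=
  (k₁ * t * (t - 1) + k₃) * ((t + 1) ^ n - t ^ n)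
    + (k₂ * t * (t - 1) * (t - 2) + k₄ * t) * ((t - 1) ^ n - t ^ n)

section SchloglDrift

variable {k₁ k₂ k₃ k₄ : ℝ}

theorem schloglDrift_add_pow_le (hk₁ : 0 ≤ k₁) (hk₂ : 0 ≤ k₂) (hk₃ : 0 ≤ k₃) (hk₄ : 0 ≤ k₄)
    (m : ℕ) {t : ℝ} (ht : 3 ≤ t) :
    schloglDrift k₁ k₂ k₃ k₄ (m + 1) t + t ^ (m + 1) ≤
      (t - 1) ^ m * (2 ^ m * ((m + 1) * (k₁ * t * (t - 1) + k₃) + t)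
        - (m + 1) * (k₂ * t * (t - 1) * (t - 2))) := by
  have ht0 : 0 ≤ t := by linarith
  have ht1 : 0 ≤ t - 1 := by linarith
  have ht2 : 0 ≤ t - 2 := by linarith
  have hbirth : (t + 1) ^ (m + 1) - t ^ (m + 1) ≤ (m + 1) * (2 ^ m * (t - 1) ^ m) :=
    calc (t + 1) ^ (m + 1) - t ^ (m + 1)
        ≤ (t + 1 - t) * (m + 1 : ℕ) * (t + 1) ^ (m + 1 - 1) :=
          pow_sub_pow_le_of_le ht0 (by linarith) (m + 1)
      _ = (m + 1) * (t + 1) ^ m := by push_cast; ring_nf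
      _ ≤ (m + 1) * (2 ^ m * (t - 1) ^ m) := by rw [← mul_pow]; gcongr; linarith
  have hdeath : (m + 1) * (t - 1) ^ m ≤ t ^ (m + 1) - (t - 1) ^ (m + 1) :=
    calc (m + 1) * (t - 1) ^ m = (t - (t - 1)) * (m + 1 : ℕ) * (t - 1) ^ (m + 1 - 1) := by
          push_cast; ring_nf
      _ ≤ t ^ (m + 1) - (t - 1) ^ (m + 1) := sub_mul_pow_le_pow_sub_pow ht1 (by linarith) (m + 1)
  have hw : t ^ (m + 1) ≤ 2 ^ m * (t - 1) ^ m * t := by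
    rw [pow_succ, ← mul_pow]; gcongr; linarith
  have hB : 0 ≤ k₁ * t * (t - 1) + k₃ := add_nonneg (mul_nonneg (mul_nonneg hk₁ ht0) ht1) hk₃
  have hD : 0 ≤ k₂ * t * (t - 1) * (t - 2) :=
    mul_nonneg (mul_nonneg (mul_nonneg hk₂ ht0) ht1) ht2
  have hk₄t : 0 ≤ k₄ * t := mul_nonneg hk₄ ht0
  have hs : 0 ≤ (m + 1) * (t - 1) ^ m := mul_nonneg (by positivity) (pow_nonneg ht1 m)
  unfold schloglDrift
  linarith [mul_le_mul_of_nonneg_left hbirth hB,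
    mul_le_mul_of_nonneg_left hdeath (add_nonneg hD hk₄t), mul_nonneg hk₄t hs]

theorem eventually_schloglDrift_add_pow_nonpos (hk₁ : 0 ≤ k₁) (hk₂ : 0 < k₂) (hk₃ : 0 ≤ k₃)
    (hk₄ : 0 ≤ k₄) (m : ℕ) :
    ∀ᶠ t : ℝ in atTop, schloglDrift k₁ k₂ k₃ k₄ (m + 1) t + t ^ (m + 1) ≤ 0 := by
  set A : ℝ := (m + 1) * (k₁ + k₃) + 1
  have hk₂m : 0 < (m + 1) * k₂ := by positivity
  filter_upwards [eventually_ge_atTop 3, eventually_ge_atTop (2 ^ m * A / ((m + 1) * k₂) + 2)]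
    with t ht3 htA
  refine (schloglDrift_add_pow_le hk₁ hk₂.le hk₃ hk₄ m ht3).trans
    (mul_nonpos_of_nonneg_of_nonpos (pow_nonneg (by linarith) m) ?_)
  have hA : 2 ^ m * A ≤ (m + 1) * k₂ * (t - 2) := by
    rw [div_add' _ _ _ hk₂m.ne', div_le_iff₀ hk₂m] at htA
    linarith
  have hquad : 1 ≤ t * (t - 1) ∧ t ≤ t * (t - 1) := by constructor <;> nlinarith
  have hlow : (m + 1) * (k₁ * t * (t - 1) + k₃) + t ≤ A * (t * (t - 1)) := by
    have := mul_le_mul_of_nonneg_left hquad.1 (by positivity : (0 : ℝ) ≤ (m + 1) * k₃)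
    linarith [hquad.2]
  have h2m : (0 : ℝ) ≤ 2 ^ m := by positivity
  linarith [mul_le_mul_of_nonneg_left hlow h2m,
    mul_le_mul_of_nonneg_right hA (by linarith : 0 ≤ t * (t - 1))]

end SchloglDrift

/-- **Statement 16** (Foster–Lyapunov drift condition for Schlögl's model).
For the rate matrix of Schlögl's model with rate constants `k₁, k₂, k₃, k₄ > 0`,
every integer `d ≥ 3` and `w(x) = x^(d-2)`, there are constants `K₁ ∈ ℝ` and `K₂ > 0`
such that `Qw(x) = (a₁(x) + a₃(x))((x+1)^(d-2) - x^(d-2))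
+ (a₂(x) + a₄(x))((x-1)^(d-2) - x^(d-2)) ≤ K₁ - K₂ x^(d-2)` for all `x ∈ ℕ`, where
`a₁(x) = k₁ x (x-1)`, `a₂(x) = k₂ x (x-1) (x-2)`, `a₃(x) = k₃`, `a₄(x) = k₄ x`. -/
theorem schlogl_foster_lyapunov
    (k₁ k₂ k₃ k₄ : ℝ) (hk₁ : 0 < k₁) (hk₂ : 0 < k₂) (hk₃ : 0 < k₃) (hk₄ : 0 < k₄)
    (d : ℕ) (hd : 3 ≤ d) :
    ∃ (K₁ K₂ : ℝ), 0 < K₂ ∧ ∀ x : ℕ,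
      (k₁ * x * ((x : ℝ) - 1) + k₃) * (((x : ℝ) + 1) ^ (d - 2) - (x : ℝ) ^ (d - 2))
        + (k₂ * x * ((x : ℝ) - 1) * ((x : ℝ) - 2) + k₄ * x) *
            (((x : ℝ) - 1) ^ (d - 2) - (x : ℝ) ^ (d - 2))
      ≤ K₁ - K₂ * (x : ℝ) ^ (d - 2) := by
  obtain ⟨m, hm⟩ : ∃ m, d - 2 = m + 1 := ⟨d - 3, by omega⟩
  have hnonpos : ∀ᶠ x : ℕ in atTop,
      schloglDrift k₁ k₂ k₃ k₄ (m + 1) x + (x : ℝ) ^ (m + 1) ≤ 0 :=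
    tendsto_natCast_atTop_atTop.eventually
      (eventually_schloglDrift_add_pow_nonpos hk₁.le hk₂ hk₃.le hk₄.le m)
  obtain ⟨K₁, hK₁⟩ := (isBoundedUnder_of_eventually_le hnonpos).bddAbove_range
  refine ⟨K₁, 1, one_pos, fun x => ?_⟩
  have hx := hK₁ (Set.mem_range_self x)
  rw [hm]
  unfold schloglDrift at hx
  linarith
end
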